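/- Let G be a group with homomorphism deg : G → ℤ, let K be a field, and let χ : G → K^× be a homomorphism such that χ(ker(deg)) is finite. Then there exists a ∈ \overline{K}^× (in an algebraic closure of K) and a positive integer n such that the twisted character g ↦ χ(g)·a^{deg(g)} has n-th power trivial, i.e. (χ(g)·a^{deg(g)})^n = 1 for all g ∈ G. -/

import Mathlib

/-!
Choose `g₁` of nonzero degree `e` and `a` with `a ^ e = χ(g₁)⁻¹`. The twist `ψ = χ · a ^ deg`
kills `g₁` and agrees with `χ` on `ker deg`; as `g ^ e * g₁ ^ (-deg g)` has degree `0`, every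
`ψ(g) ^ e` lies in the finite group `χ(ker deg)`. If all degrees vanish, `χ` itself has finite image.
-/

open Multiplicative

theorem IsAlgClosed.exists_units_pow_eq {k : Type*} [Field k] [IsAlgClosed k] (u : kˣ) {n : ℕ}
    (hn : n ≠ 0) : ∃ a : kˣ, a ^ n = u := by
  obtain ⟨b, hb⟩ := IsAlgClosed.exists_pow_nat_eq (u : k) (Nat.pos_of_ne_zero hn)
  have hb0 : b ≠ 0 := by
    rintro rfl
    exact u.ne_zero (by rw [← hb, zero_pow hn])
  exact ⟨Units.mk0 b hb0, Units.ext (by simp [hb])⟩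

theorem IsAlgClosed.exists_units_zpow_eq {k : Type*} [Field k] [IsAlgClosed k] (u : kˣ) {e : ℤ}
    (he : e ≠ 0) : ∃ a : kˣ, a ^ e = u := by
  have hn : e.natAbs ≠ 0 := Int.natAbs_ne_zero.mpr he
  rcases Int.natAbs_eq e with h | h
  · obtain ⟨a, ha⟩ := exists_units_pow_eq u hn
    exact ⟨a, by rw [h, zpow_natCast, ha]⟩
  · obtain ⟨a, ha⟩ := exists_units_pow_eq u⁻¹ hn
    exact ⟨a, by rw [h, zpow_neg, zpow_natCast, ha, inv_inv]⟩

theorem pow_natAbs_mul_card_eq_one_of_zpow_mem {M : Type*} [Group M] {H : Subgroup M} [Finite H]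
    {x : M} {e : ℤ} (hx : x ^ e ∈ H) : x ^ (e.natAbs * Nat.card H) = 1 := by
  have h : (⟨x ^ e, hx⟩ : H) ^ Nat.card H = 1 := pow_card_eq_one'
  have hxe : x ^ (e * Nat.card H) = 1 := by
    rw [zpow_mul, zpow_natCast]
    exact congrArg Subtype.val h
  simpa [Int.natAbs_mul] using pow_natAbs_eq_one.mpr hxe

section Twist

variable {G M : Type*} [Group G] [CommGroup M]

def twist (χ : G →* M) (δ : G →* Multiplicative ℤ) (a : M) : G →* M :=
  χ * (zpowersHom M a).comp δ

theorem twist_apply (χ : G →* M) (δ : G →* Multiplicative ℤ) (a : M) (g : G) :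
    twist χ δ a g = χ g * a ^ (δ g).toAdd :=
  rfl

theorem twist_apply_of_mem_ker (χ : G →* M) {δ : G →* Multiplicative ℤ} (a : M) {g : G}
    (hg : g ∈ δ.ker) : twist χ δ a g = χ g := by
  rw [twist_apply, MonoidHom.mem_ker.mp hg, toAdd_one, zpow_zero, mul_one]

theorem map_ker_twist (χ : G →* M) (δ : G →* Multiplicative ℤ) (a : M) :
    δ.ker.map (twist χ δ a) = δ.ker.map χ := by
  ext x
  simp only [Subgroup.mem_map]
  exact exists_congr fun g => and_congr_right fun hg => by rw [twist_apply_of_mem_ker χ a hg]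

theorem twist_eq_one {χ : G →* M} {δ : G →* Multiplicative ℤ} {a : M} {g₁ : G}
    (ha : a ^ (δ g₁).toAdd = (χ g₁)⁻¹) : twist χ δ a g₁ = 1 := by
  rw [twist_apply, ha, mul_inv_cancel]

theorem zpow_mem_map_ker_of_map_eq_one (δ : G →* Multiplicative ℤ) {ψ : G →* M} {g₁ : G}
    (h₁ : ψ g₁ = 1) (g : G) : ψ g ^ (δ g₁).toAdd ∈ δ.ker.map ψ := by
  refine ⟨g ^ (δ g₁).toAdd * g₁ ^ (-(δ g).toAdd), ?_, ?_⟩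
  · rw [SetLike.mem_coe, MonoidHom.mem_ker, ← toAdd_eq_zero]
    simp [mul_comm]
  · simp [h₁]

end Twist

theorem finite_after_twist {G K : Type*} [Group G] [Field K]
    (deg : G → ℤ) (hdeg : ∀ a b : G, deg (a * b) = deg a + deg b)
    (χ : G →* Kˣ)
    (hfin : (χ '' {g : G | deg g = 0}).Finite) :
    ∃ (a : (AlgebraicClosure K)ˣ) (n : ℕ), 0 < n ∧
      ∀ g : G,
        ((Units.map (algebraMap K (AlgebraicClosure K)).toMonoidHom (χ g)) *
            a ^ (deg g)) ^ n = 1 := by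
  let ι : Kˣ →* (AlgebraicClosure K)ˣ := Units.map (algebraMap K (AlgebraicClosure K)).toMonoidHom
  let δ : G →* Multiplicative ℤ := MonoidHom.mk' (fun g => ofAdd (deg g)) hdeg
  have hker : (δ.ker : Set G) = {g | deg g = 0} := Set.ext fun _ => ofAdd_eq_one
  let H := δ.ker.map (ι.comp χ)
  have : Finite H := by
    have hH : (H : Set (AlgebraicClosure K)ˣ).Finite := by
      rw [Subgroup.coe_map, MonoidHom.coe_comp, Set.image_comp, hker]
      exact hfin.image ι
    exact hH.to_subtype
  obtain ⟨e, he, a, hpow⟩ : ∃ e : ℤ, e ≠ 0 ∧ ∃ a, ∀ g, twist (ι.comp χ) δ a g ^ e ∈ H := by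
    by_cases hδ : ∃ g₁, deg g₁ ≠ 0
    · obtain ⟨g₁, hg₁⟩ := hδ
      obtain ⟨a, ha⟩ := IsAlgClosed.exists_units_zpow_eq (ι (χ g₁))⁻¹ hg₁
      refine ⟨deg g₁, hg₁, a, fun g => ?_⟩
      have h := zpow_mem_map_ker_of_map_eq_one δ (twist_eq_one (χ := ι.comp χ) (δ := δ) ha) g
      rwa [map_ker_twist] at h
    · push Not at hδ
      have hmem (g : G) : g ∈ δ.ker := ofAdd_eq_one.mpr (hδ g)
      refine ⟨1, one_ne_zero, 1, fun g => ?_⟩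
      rw [zpow_one, twist_apply_of_mem_ker _ _ (hmem g)]
      exact Subgroup.mem_map_of_mem _ (hmem g)
  exact ⟨a, e.natAbs * Nat.card H, Nat.mul_pos (Int.natAbs_pos.mpr he) Nat.card_pos,
    fun g => pow_natAbs_mul_card_eq_one_of_zpow_mem (hpow g)⟩
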